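/- arXiv:1304.6814 — 2 statements merged into one kernel-verified Lean document; each statement's English description precedes it below -/
import Mathlib

section
/- Improved upper bounds for structure functions for p ≥ 1: for every p ≥ 0 there exists a constant C(p) > 0 depending only on p, f and D such that for all ℓ ∈ [0,1]: S_p(ℓ) ≤ C(p) ℓ^p if 0 ≤ p ≤ 1, and S_p(ℓ) ≤ C(p) ℓ if p ≥ 1. -/
open MeasureTheory Set
open scoped ENNReal

noncomputable section

/-- The `L^p` norm of a function on the circle, represented by the
fundamental domain `(0,1]` (`p = ∞` gives the essential supremum). -/
def circLp (p : ℝ≥0∞) (v : ℝ → ℝ) : ℝ :=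
  (eLpNorm v p (volume.restrict (Ioc (0:ℝ) 1))).toReal

/-- The homogeneous `W^{m,p}` norm `|v|_{m,p} = |v^{(m)}|_p` on the circle. -/
def circW (m : ℕ) (p : ℝ≥0∞) (v : ℝ → ℝ) : ℝ :=
  circLp p (iteratedDeriv m v)

/-- The homogeneous `H^m` norm `‖v‖_m = |v|_{m,2}` on the circle. -/
def circH (m : ℕ) (v : ℝ → ℝ) : ℝ := circW m 2 v

/-- The parameter `D = max(|u₀|₁⁻¹, |u₀|_{1,∞})`. -/
def Dparam (u0 : ℝ → ℝ) : ℝ := max (circLp 1 u0)⁻¹ (circW 1 ⊤ u0)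

/-- `γ(m,p) = max (0, m - 1/p)`. -/
def gam (m : ℕ) (p : ℝ≥0∞) : ℝ := max 0 ((m : ℝ) - (1 / p).toReal)

/-- `u` is a smooth, space-periodic, zero mean value solution of the
generalised Burgers equation `u_t + f'(u) u_x = ν u_xx` for `t ≥ 0`. -/
def BurgersSol (f : ℝ → ℝ) (ν : ℝ) (u : ℝ → ℝ → ℝ) : Prop :=
  ContDiff ℝ (⊤ : ℕ∞) (fun q : ℝ × ℝ => u q.1 q.2) ∧
  (∀ t, Function.Periodic (u t) 1) ∧
  (∀ t, 0 ≤ t → (∫ x in (0:ℝ)..1, u t x) = 0) ∧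
  (∀ t, 0 ≤ t → ∀ x,
    deriv (fun s => u s x) t + deriv f (u t x) * deriv (u t) x
      = ν * iteratedDeriv 2 (u t) x)

/-- The left end `T₁ = (1/4) D⁻² C̃⁻¹` of the averaging interval. -/
def Tone (D Ct : ℝ) : ℝ := (1/4) * (D^2)⁻¹ * Ct⁻¹

/-- The right end `T₂ = max((3/2)T₁, 2Dσ⁻¹)` of the averaging interval. -/
def Ttwo (σ D Ct : ℝ) : ℝ := max ((3/2) * Tone D Ct) (2 * D * σ⁻¹)

/-- The time average `{A} = (T₂-T₁)⁻¹ ∫_{T₁}^{T₂} A(t) dt`. -/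
def tavg (σ D Ct : ℝ) (A : ℝ → ℝ) : ℝ :=
  (Ttwo σ D Ct - Tone D Ct)⁻¹ * ∫ t in (Tone D Ct)..(Ttwo σ D Ct), A t

/-- The structure function `S_p(ℓ)`. -/
def Sfun (σ D Ct : ℝ) (u : ℝ → ℝ → ℝ) (p ℓ : ℝ) : ℝ :=
  tavg σ D Ct (fun t => ∫ x in (0:ℝ)..1, |u t (x + ℓ) - u t x| ^ p)

/-!
Differentiating the equation in `x`, `w = u_x` satisfies
`w_t + f''(u) w² + f'(u) w_x = ν w_xx`, so at a spatial maximum of `w` we get the Riccati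
inequality `w_t ≤ -σ w²`. A first-time argument for `σ t w` turns this into Oleinik's
one-sided estimate `u_x ≤ 1/(σ t)`; on the averaging window `t ≥ T₁`, so `u_x ≤ K := 1/(σ T₁)`.
Since `u_x` has zero mean, `|u_x|₁ ≤ 2K`; hence the increments `δ = |u(x + ℓ) - u(x)|` satisfy
`δ ≤ 2K` and `∫ δ ≤ 2Kℓ`. For `p ≥ 1` this gives `∫ δ^p ≤ (2K)^(p-1) ∫ δ ≤ (2K)^p ℓ`, and for
`p ≤ 1` the bound `r^p ≤ M^p + r M^(p-1)` with `M = 2Kℓ` gives `∫ δ^p ≤ 2 (2Kℓ)^p`.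
-/

open Filter Topology Function

lemma Function.Periodic.deriv {𝕜 F : Type*} [NontriviallyNormedField 𝕜] [NormedAddCommGroup F]
    [NormedSpace 𝕜 F] {v : 𝕜 → F} {c : 𝕜} (h : Periodic v c) : Periodic (deriv v) c :=
  fun x => by rw [← deriv_comp_add_const, h.funext]

theorem IsLocalMax.deriv_deriv_nonpos {g : ℝ → ℝ} {x : ℝ} (h : IsLocalMax g x)
    (hg : ContinuousAt g x) : deriv (deriv g) x ≤ 0 := by
  by_contra! hpos
  have hconst : g =ᶠ[𝓝 x] fun _ => g x :=
    (h.and (isLocalMin_of_deriv_deriv_pos hpos h.deriv_eq_zero hg)).mono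
      fun y hy => le_antisymm hy.1 hy.2
  have hderiv : deriv g =ᶠ[𝓝 x] fun _ => 0 :=
    hconst.eventuallyEq_nhds.mono fun y hy => by rw [hy.deriv_eq, deriv_const]
  rw [hderiv.deriv_eq, deriv_const] at hpos
  exact hpos.false

theorem IsLocalMaxOn.hasDerivAt_nonneg_of_Iic {g : ℝ → ℝ} {c s : ℝ}
    (h : IsLocalMaxOn g (Iic s) s) (hg : HasDerivAt g c s) : 0 ≤ c := by
  have := h.hasFDerivWithinAt_nonpos hg.hasFDerivAt.hasFDerivWithinAt (y := -1)
    (mem_posTangentConeAt_of_segment_subset (by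
      rw [segment_symm, segment_eq_Icc (by linarith)]
      exact Icc_subset_Iic_self))
  simpa using this

def partialFst (G : ℝ × ℝ → ℝ) (q : ℝ × ℝ) : ℝ := fderiv ℝ G q (1, 0)

def partialSnd (G : ℝ × ℝ → ℝ) (q : ℝ × ℝ) : ℝ := fderiv ℝ G q (0, 1)

section PartialDerivatives

variable {G : ℝ × ℝ → ℝ}

lemma hasDerivAt_partialFst {t x : ℝ} (hG : DifferentiableAt ℝ G (t, x)) :
    HasDerivAt (fun s => G (s, x)) (partialFst G (t, x)) t :=
  hG.hasFDerivAt.comp_hasDerivAt t ((hasDerivAt_id t).prodMk (hasDerivAt_const t x))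

lemma hasDerivAt_partialSnd {t x : ℝ} (hG : DifferentiableAt ℝ G (t, x)) :
    HasDerivAt (fun y => G (t, y)) (partialSnd G (t, x)) x :=
  hG.hasFDerivAt.comp_hasDerivAt x ((hasDerivAt_const x t).prodMk (hasDerivAt_id x))

lemma ContDiff.partialFst {m n : WithTop ℕ∞} (hG : ContDiff ℝ n G) (hmn : m + 1 ≤ n) :
    ContDiff ℝ m (partialFst G) :=
  (hG.fderiv_right hmn).clm_apply contDiff_const

lemma ContDiff.partialSnd {m n : WithTop ℕ∞} (hG : ContDiff ℝ n G) (hmn : m + 1 ≤ n) :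
    ContDiff ℝ m (partialSnd G) :=
  (hG.fderiv_right hmn).clm_apply contDiff_const

lemma partialFst_partialSnd_comm (hG : ContDiff ℝ 2 G) (q : ℝ × ℝ) :
    partialFst (partialSnd G) q = partialSnd (partialFst G) q := by
  have hG' : Differentiable ℝ (fderiv ℝ G) :=
    (hG.fderiv_right (m := 1) le_rfl).differentiable one_ne_zero
  show fderiv ℝ (fun z => fderiv ℝ G z (0, 1)) q (1, 0)
    = fderiv ℝ (fun z => fderiv ℝ G z (1, 0)) q (0, 1)
  rw [fderiv_clm_apply (hG' q) (differentiableAt_const _),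
    fderiv_clm_apply (hG' q) (differentiableAt_const _)]
  simpa using ((hG.contDiffAt (x := q)).isSymmSndFDerivAt (by simp) (1, 0) (0, 1))

end PartialDerivatives

lemma exists_first_time_nonneg {X : Type*} [TopologicalSpace X] {K : Set X} (hK : IsCompact K)
    {F : ℝ × X → ℝ} (hF : Continuous F) {a b : ℝ} (hab : a ≤ b) {x₁ : X} (hx₁ : x₁ ∈ K)
    (hb : 0 ≤ F (b, x₁)) (ha : ∀ y ∈ K, F (a, y) < 0) :
    ∃ s ∈ Ioc a b, ∃ x ∈ K, 0 ≤ F (s, x) ∧ (∀ y ∈ K, F (s, y) ≤ F (s, x)) ∧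
      ∀ r ∈ Ico a s, F (r, x) < 0 := by
  set S := Prod.fst '' ((Icc a b ×ˢ K) ∩ {q | 0 ≤ F q})
  have hS : IsCompact S :=
    ((isCompact_Icc.prod hK).inter_right (isClosed_le continuous_const hF)).image
      continuous_fst
  have hbS : b ∈ S := ⟨(b, x₁), ⟨⟨⟨hab, le_rfl⟩, hx₁⟩, hb⟩, rfl⟩
  obtain ⟨⟨s, y₀⟩, ⟨⟨hs, hy₀⟩, hsy₀⟩, hsInf⟩ := hS.sInf_mem ⟨b, hbS⟩
  have has : a < s := hs.1.lt_of_ne fun h => (ha y₀ hy₀).not_ge (h ▸ hsy₀)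
  obtain ⟨x, hx, hmax⟩ := hK.exists_isMaxOn ⟨y₀, hy₀⟩
    (hF.comp (continuous_const.prodMk continuous_id)).continuousOn
  refine ⟨s, ⟨has, hs.2⟩, x, hx, hsy₀.trans (hmax hy₀), fun y hy => hmax hy, ?_⟩
  intro r hr
  by_contra! hr0
  have hrS : r ∈ S := ⟨(r, x), ⟨⟨⟨hr.1, hr.2.le.trans hs.2⟩, hx⟩, hr0⟩, rfl⟩
  exact (csInf_le hS.bddBelow hrS).not_gt (hsInf ▸ hr.2)

theorem le_inv_mul_of_partialFst_le_neg_sq {W : ℝ × ℝ → ℝ} {σ : ℝ} (hσ : 0 < σ)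
    (hW : Differentiable ℝ W) (hper : ∀ t, Periodic (fun x => W (t, x)) 1)
    (hriccati : ∀ t > 0, ∀ x, (∀ y, W (t, y) ≤ W (t, x)) →
      partialFst W (t, x) ≤ -(σ * W (t, x) ^ 2))
    {t : ℝ} (ht : 0 < t) (x : ℝ) : W (t, x) ≤ (σ * t)⁻¹ := by
  by_contra! hlt
  have hWfract : ∀ s y, W (s, Int.fract y) = W (s, y) := fun s y => by
    simpa using (hper s).sub_int_mul_eq (n := ⌊y⌋) (x := y)
  set η := σ * t * W (t, x) - 1
  have hη : 0 < η := by
    have := (inv_lt_iff_one_lt_mul₀' (by positivity)).1 hlt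
    linarith
  -- `σ s W(s, ·)` cannot first reach the level `1 + η > 1`: there its time derivative is
  -- `σ W (1 - σ s W) < 0`.
  set F : ℝ × ℝ → ℝ := fun q => σ * q.1 * W q - 1 - η
  obtain ⟨s, hs, y, -, hFy, hmax, hbefore⟩ :=
    exists_first_time_nonneg (K := Icc 0 1) (F := F) isCompact_Icc
      (by have := hW.continuous; fun_prop) ht.le
      (x₁ := Int.fract x) ⟨Int.fract_nonneg x, (Int.fract_lt_one x).le⟩
      (by simp [F, hWfract, η]) (fun y _ => by simp [F]; linarith)
  have hσs : 0 < σ * s := mul_pos hσ hs.1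
  have hWmax : ∀ z, W (s, z) ≤ W (s, y) := fun z => by
    have := hmax _ ⟨Int.fract_nonneg z, (Int.fract_lt_one z).le⟩
    simp only [F, hWfract] at this
    exact le_of_mul_le_mul_left (by linarith) hσs
  have hderiv : HasDerivAt (fun r => F (r, y))
      (σ * W (s, y) + σ * s * partialFst W (s, y)) s := by
    have := ((hasDerivAt_id s).const_mul σ).mul (hasDerivAt_partialFst (hW (s, y)))
    simpa [F] using (this.sub_const 1).sub_const η
  have hleft : IsLocalMaxOn (fun r => F (r, y)) (Iic s) s := by
    filter_upwards [inter_mem_nhdsWithin (Iic s) (Ioi_mem_nhds hs.1)] with r hr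
    rcases (show r ≤ s from hr.1).lt_or_eq with hrs | rfl
    · exact (hbefore r ⟨hr.2.le, hrs⟩).le.trans hFy
    · exact le_rfl
  have hFt := hleft.hasDerivAt_nonneg_of_Iic hderiv
  have hWt := hriccati s hs.1 y hWmax
  have hσsW : 1 < σ * s * W (s, y) := by simp only [F] at hFy; linarith
  have hW_pos : 0 < W (s, y) := pos_of_mul_pos_right (by linarith) hσs.le
  nlinarith [mul_le_mul_of_nonneg_left hWt hσs.le,
    mul_pos (mul_pos hσ hW_pos) (sub_pos.2 hσsW)]

section Oleinik

variable {f : ℝ → ℝ} {σ ν : ℝ} {u : ℝ → ℝ → ℝ}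

lemma BurgersSol.contDiff_uncurry (hu : BurgersSol f ν u) :
    ContDiff ℝ (⊤ : ℕ∞) (uncurry u) :=
  hu.1

lemma BurgersSol.partialFst_eq (hu : BurgersSol f ν u) {t : ℝ} (ht : 0 ≤ t) (x : ℝ) :
    partialFst (uncurry u) (t, x) = ν * partialSnd (partialSnd (uncurry u)) (t, x)
      - deriv f (u t x) * partialSnd (uncurry u) (t, x) := by
  have hU : Differentiable ℝ (uncurry u) := hu.contDiff_uncurry.differentiable (by simp)
  have hW : Differentiable ℝ (partialSnd (uncurry u)) :=
    (hu.contDiff_uncurry.partialSnd (m := 1) (WithTop.coe_le_coe.2 le_top)).differentiable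
      one_ne_zero
  have hut : HasDerivAt (fun s => u s x) (partialFst (uncurry u) (t, x)) t :=
    hasDerivAt_partialFst (hU (t, x))
  have hux : deriv (u t) = fun y => partialSnd (uncurry u) (t, y) :=
    funext fun y => (hasDerivAt_partialSnd (hU (t, y))).deriv
  have hpde := hu.2.2.2 t ht x
  rw [hut.deriv, iteratedDeriv_succ, iteratedDeriv_one, hux,
    (hasDerivAt_partialSnd (hW (t, x))).deriv] at hpde
  linarith

lemma BurgersSol.partialFst_partialSnd_le (hf : ContDiff ℝ 2 f)
    (hconv : ∀ x, σ ≤ iteratedDeriv 2 f x) (hν : 0 ≤ ν) (hu : BurgersSol f ν u) {t : ℝ}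
    (ht : 0 ≤ t) {x : ℝ} (hmax : IsLocalMax (fun y => partialSnd (uncurry u) (t, y)) x) :
    partialFst (partialSnd (uncurry u)) (t, x) ≤ -(σ * partialSnd (uncurry u) (t, x) ^ 2) := by
  have hU := hu.contDiff_uncurry
  set W := partialSnd (uncurry u)
  have hWsmooth : ContDiff ℝ (⊤ : ℕ∞) W := hU.partialSnd (by simp)
  have hW : Differentiable ℝ W := hWsmooth.differentiable (by simp)
  have hWx : Differentiable ℝ (partialSnd W) :=
    (hWsmooth.partialSnd (m := 1) (WithTop.coe_le_coe.2 le_top)).differentiable one_ne_zero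
  have hUt : Differentiable ℝ (partialFst (uncurry u)) :=
    (hU.partialFst (m := 1) (WithTop.coe_le_coe.2 le_top)).differentiable one_ne_zero
  have hf' : HasDerivAt (deriv f) (iteratedDeriv 2 f (u t x)) (u t x) := by
    have := hf.differentiable_iteratedDeriv 1 (by norm_num) (u t x)
    rw [iteratedDeriv_one] at this
    rw [iteratedDeriv_succ, iteratedDeriv_one]
    exact this.hasDerivAt
  have hux : HasDerivAt (u t) (W (t, x)) x :=
    hasDerivAt_partialSnd ((hU.differentiable (by simp)) (t, x))
  have hWy : HasDerivAt (fun y => W (t, y)) (partialSnd W (t, x)) x :=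
    hasDerivAt_partialSnd (hW (t, x))
  have hrhs : HasDerivAt (fun y => ν * partialSnd W (t, y) - deriv f (u t y) * W (t, y))
      (ν * partialSnd (partialSnd W) (t, x)
        - (iteratedDeriv 2 f (u t x) * W (t, x) * W (t, x)
          + deriv f (u t x) * partialSnd W (t, x))) x :=
    ((hasDerivAt_partialSnd (hWx (t, x))).const_mul ν).sub ((hf'.comp x hux).mul hWy)
  -- by Clairaut, `∂ₜ u_x` is the space derivative of `∂ₜ u`, given by the equation
  have heq : partialFst W (t, x) = ν * partialSnd (partialSnd W) (t, x)
      - (iteratedDeriv 2 f (u t x) * W (t, x) * W (t, x)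
        + deriv f (u t x) * partialSnd W (t, x)) := by
    rw [partialFst_partialSnd_comm (hU.of_le (WithTop.coe_le_coe.2 le_top))]
    refine (hasDerivAt_partialSnd (hUt (t, x))).unique ?_
    simpa only [hu.partialFst_eq ht] using hrhs
  have hWx0 : partialSnd W (t, x) = 0 := hmax.hasDerivAt_eq_zero hWy
  have hWxx : partialSnd (partialSnd W) (t, x) ≤ 0 := by
    have hd : deriv (fun y => W (t, y)) = fun y => partialSnd W (t, y) :=
      funext fun y => (hasDerivAt_partialSnd (hW (t, y))).deriv
    simpa [hd, (hasDerivAt_partialSnd (hWx (t, x))).deriv] using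
      hmax.deriv_deriv_nonpos hWy.continuousAt
  rw [heq, hWx0]
  nlinarith [mul_nonpos_of_nonneg_of_nonpos hν hWxx, hconv (u t x), sq_nonneg (W (t, x))]

theorem BurgersSol.deriv_le_inv (hf : ContDiff ℝ 2 f) (hσ : 0 < σ)
    (hconv : ∀ x, σ ≤ iteratedDeriv 2 f x) (hν : 0 ≤ ν) (hu : BurgersSol f ν u) {t : ℝ}
    (ht : 0 < t) (x : ℝ) : deriv (u t) x ≤ (σ * t)⁻¹ := by
  have hU := hu.contDiff_uncurry
  have hW : Differentiable ℝ (partialSnd (uncurry u)) :=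
    (hU.partialSnd (m := 1) (WithTop.coe_le_coe.2 le_top)).differentiable one_ne_zero
  have hux : ∀ s, deriv (u s) = fun y => partialSnd (uncurry u) (s, y) := fun s =>
    funext fun y => (hasDerivAt_partialSnd ((hU.differentiable (by simp)) (s, y))).deriv
  rw [hux t]
  refine le_inv_mul_of_partialFst_le_neg_sq hσ hW (fun s => hux s ▸ (hu.2.1 s).deriv)
    (fun s hs y hy => hu.partialFst_partialSnd_le hf hconv hν hs.le ?_) ht x
  exact Eventually.of_forall hy

end Oleinik

section SpaceIncrements

open intervalIntegral

variable {v : ℝ → ℝ}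

lemma integral_comp_add_sub_comm {V : ℝ → ℝ} (hV : Continuous V) (b c : ℝ) :
    ∫ x in (0:ℝ)..b, (V (x + c) - V x) = ∫ x in (0:ℝ)..c, (V (x + b) - V x) := by
  have hi : ∀ a b : ℝ, IntervalIntegrable V volume a b := fun _ _ => hV.intervalIntegrable _ _
  have hi' : ∀ d a b : ℝ, IntervalIntegrable (fun x => V (x + d)) volume a b :=
    fun d _ _ => (hV.comp (continuous_add_const d)).intervalIntegrable _ _
  rw [integral_sub (hi' _ _ _) (hi _ _), integral_sub (hi' _ _ _) (hi _ _),
    integral_comp_add_right, integral_comp_add_right, zero_add, zero_add, add_comm b c,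
    sub_eq_sub_iff_add_eq_add, add_comm (∫ x in c..c + b, V x),
    integral_add_adjacent_intervals (hi _ _) (hi _ _), add_comm (∫ x in b..c + b, V x),
    integral_add_adjacent_intervals (hi _ _) (hi _ _)]

lemma integral_deriv_eq_zero_of_periodic (hv : ContDiff ℝ 1 v) (hper : Periodic v 1) :
    ∫ x in (0:ℝ)..1, deriv v x = 0 := by
  rw [integral_deriv_eq_sub (fun x _ => (hv.differentiable one_ne_zero).differentiableAt)
    ((hv.continuous_deriv le_rfl).intervalIntegrable 0 1)]
  simpa [sub_eq_zero] using hper 0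

lemma integral_abs_deriv_le_two_mul (hv : ContDiff ℝ 1 v) (hper : Periodic v 1) {K : ℝ}
    (hK : ∀ x, deriv v x ≤ K) : ∫ x in (0:ℝ)..1, |deriv v x| ≤ 2 * K := by
  have hcont : Continuous (deriv v) := hv.continuous_deriv le_rfl
  have hK0 : 0 ≤ K := by
    simpa [integral_deriv_eq_zero_of_periodic hv hper] using
      integral_mono_on zero_le_one (hcont.intervalIntegrable (μ := volume) 0 1)
        (continuous_const.intervalIntegrable 0 1) (fun x _ => hK x)
  calc ∫ x in (0:ℝ)..1, |deriv v x|
      ≤ ∫ x in (0:ℝ)..1, (2 * K - deriv v x) :=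
        integral_mono_on zero_le_one (hcont.abs.intervalIntegrable 0 1)
          ((continuous_const.sub hcont).intervalIntegrable 0 1)
          fun x _ => abs_le.2 ⟨by linarith [hK x], by linarith [hK x]⟩
    _ = 2 * K := by
        rw [integral_sub intervalIntegrable_const (hcont.intervalIntegrable 0 1),
          integral_deriv_eq_zero_of_periodic hv hper]
        simp

lemma abs_sub_le_integral_abs_deriv (hv : ContDiff ℝ 1 v) {a b : ℝ} (hab : a ≤ b) :
    |v b - v a| ≤ ∫ y in a..b, |deriv v y| := by
  rw [← integral_deriv_eq_sub (fun x _ => (hv.differentiable one_ne_zero).differentiableAt)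
    ((hv.continuous_deriv le_rfl).intervalIntegrable a b)]
  exact abs_integral_le_integral_abs hab

lemma integral_abs_deriv_add_one (hper : Periodic v 1) (x : ℝ) :
    ∫ y in x..x + 1, |deriv v y| = ∫ y in (0:ℝ)..1, |deriv v y| := by
  simpa using (hper.deriv.comp abs).intervalIntegral_add_eq x 0

lemma abs_sub_le_integral_abs_deriv_of_periodic (hv : ContDiff ℝ 1 v) (hper : Periodic v 1)
    {ℓ : ℝ} (hℓ : ℓ ∈ Icc (0:ℝ) 1) (x : ℝ) :
    |v (x + ℓ) - v x| ≤ ∫ y in (0:ℝ)..1, |deriv v y| := by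
  rw [← integral_abs_deriv_add_one hper x]
  refine (abs_sub_le_integral_abs_deriv hv (by linarith [hℓ.1])).trans ?_
  apply integral_mono_interval le_rfl (by linarith [hℓ.1]) (by linarith [hℓ.2])
  · exact Eventually.of_forall fun y => abs_nonneg _
  · exact (hv.continuous_deriv le_rfl).abs.intervalIntegrable _ _

lemma integral_abs_sub_le_mul_integral_abs_deriv (hv : ContDiff ℝ 1 v) (hper : Periodic v 1)
    {ℓ : ℝ} (hℓ : 0 ≤ ℓ) :
    ∫ x in (0:ℝ)..1, |v (x + ℓ) - v x| ≤ ℓ * ∫ y in (0:ℝ)..1, |deriv v y| := by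
  have hcont : Continuous fun y => |deriv v y| := (hv.continuous_deriv le_rfl).abs
  -- `V` is a primitive of `|v'|`: it dominates the increments of `v`, and by periodicity
  -- `V (x + 1) - V x` is the constant `∫ |v'|`
  set V : ℝ → ℝ := fun x => ∫ y in (0:ℝ)..x, |deriv v y|
  have hV : Continuous V := continuous_primitive (fun _ _ => hcont.intervalIntegrable _ _) 0
  have hVsub : ∀ a b, V b - V a = ∫ y in a..b, |deriv v y| := fun a b =>
    integral_interval_sub_left (hcont.intervalIntegrable _ _) (hcont.intervalIntegrable _ _)
  have hδ : Continuous fun x => |v (x + ℓ) - v x| :=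
    ((hv.continuous.comp (continuous_add_const ℓ)).sub hv.continuous).abs
  calc ∫ x in (0:ℝ)..1, |v (x + ℓ) - v x|
      ≤ ∫ x in (0:ℝ)..1, (V (x + ℓ) - V x) :=
        integral_mono_on zero_le_one (hδ.intervalIntegrable _ _)
          (((hV.comp (continuous_add_const ℓ)).sub hV).intervalIntegrable _ _)
          fun x _ => (hVsub _ _).symm ▸ abs_sub_le_integral_abs_deriv hv (by linarith)
    _ = ∫ x in (0:ℝ)..ℓ, (V (x + 1) - V x) := integral_comp_add_sub_comm hV 1 ℓ
    _ = ℓ * ∫ y in (0:ℝ)..1, |deriv v y| := by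
        simp [hVsub, integral_abs_deriv_add_one hper]

end SpaceIncrements

lemma rpow_le_rpow_sub_one_mul {r B p : ℝ} (hr : 0 ≤ r) (hrB : r ≤ B) (hp : 1 ≤ p) :
    r ^ p ≤ B ^ (p - 1) * r := by
  calc r ^ p = r ^ (p - 1) * r := by
        rw [← Real.rpow_add_one' hr (by linarith), sub_add_cancel]
    _ ≤ B ^ (p - 1) * r := by gcongr

lemma rpow_le_rpow_add_mul_rpow_sub_one {r M p : ℝ} (hr : 0 ≤ r) (hM : 0 < M) (hp0 : 0 ≤ p)
    (hp1 : p ≤ 1) : r ^ p ≤ M ^ p + r * M ^ (p - 1) := by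
  rcases le_or_gt r M with hrM | hMr
  · have : r ^ p ≤ M ^ p := Real.rpow_le_rpow hr hrM hp0
    have : 0 ≤ r * M ^ (p - 1) := by positivity
    linarith
  · have hr0 : 0 < r := hM.trans hMr
    have : r ^ p ≤ r * M ^ (p - 1) := by
      calc r ^ p = r * r ^ (p - 1) := by
            rw [mul_comm, ← Real.rpow_add_one hr0.ne', sub_add_cancel]
        _ ≤ r * M ^ (p - 1) :=
            mul_le_mul_of_nonneg_left (Real.rpow_le_rpow_of_nonpos hM hMr.le (by linarith)) hr
    linarith [Real.rpow_nonneg hM.le p]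

open intervalIntegral in
lemma integral_rpow_le_two_mul_rpow {g : ℝ → ℝ} (hg : Continuous g) (hg0 : ∀ x, 0 ≤ g x)
    {M p : ℝ} (hM : 0 < M) (hgM : ∫ x in (0:ℝ)..1, g x ≤ M) (hp0 : 0 ≤ p) (hp1 : p ≤ 1) :
    ∫ x in (0:ℝ)..1, g x ^ p ≤ 2 * M ^ p :=
  calc ∫ x in (0:ℝ)..1, g x ^ p
      ≤ ∫ x in (0:ℝ)..1, (M ^ p + g x * M ^ (p - 1)) :=
        integral_mono_on zero_le_one
          ((hg.rpow_const fun _ => Or.inr hp0).intervalIntegrable 0 1)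
          ((continuous_const.add (hg.mul continuous_const)).intervalIntegrable 0 1)
          fun x _ => rpow_le_rpow_add_mul_rpow_sub_one (hg0 x) hM hp0 hp1
    _ = M ^ p + (∫ x in (0:ℝ)..1, g x) * M ^ (p - 1) := by
        rw [integral_add (g := fun x => g x * M ^ (p - 1)) intervalIntegrable_const
          ((hg.mul continuous_const).intervalIntegrable 0 1),
          intervalIntegral.integral_mul_const]
        simp
    _ ≤ M ^ p + M * M ^ (p - 1) := by gcongr
    _ = 2 * M ^ p := by
        rw [mul_comm M, ← Real.rpow_add_one hM.ne', sub_add_cancel]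
        ring

section StructureFunctionSlice

open intervalIntegral

variable {v : ℝ → ℝ} {K ℓ p : ℝ}

lemma integral_abs_sub_rpow_le_of_one_le (hv : ContDiff ℝ 1 v) (hper : Periodic v 1)
    (hK : ∀ x, deriv v x ≤ K) (hℓ : ℓ ∈ Icc (0:ℝ) 1) (hp : 1 ≤ p) :
    ∫ x in (0:ℝ)..1, |v (x + ℓ) - v x| ^ p ≤ (2 * K) ^ p * ℓ := by
  have hδ : Continuous fun x => |v (x + ℓ) - v x| :=
    ((hv.continuous.comp (continuous_add_const ℓ)).sub hv.continuous).abs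
  have hsup : ∀ x, |v (x + ℓ) - v x| ≤ 2 * K := fun x =>
    (abs_sub_le_integral_abs_deriv_of_periodic hv hper hℓ x).trans
      (integral_abs_deriv_le_two_mul hv hper hK)
  have hK0 : 0 ≤ 2 * K := (abs_nonneg _).trans (hsup 0)
  calc ∫ x in (0:ℝ)..1, |v (x + ℓ) - v x| ^ p
      ≤ ∫ x in (0:ℝ)..1, (2 * K) ^ (p - 1) * |v (x + ℓ) - v x| :=
        integral_mono_on zero_le_one
          ((hδ.rpow_const fun _ => Or.inr (by linarith)).intervalIntegrable 0 1)
          ((continuous_const.mul hδ).intervalIntegrable 0 1)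
          fun x _ => rpow_le_rpow_sub_one_mul (abs_nonneg _) (hsup x) hp
    _ = (2 * K) ^ (p - 1) * ∫ x in (0:ℝ)..1, |v (x + ℓ) - v x| := integral_const_mul _ _
    _ ≤ (2 * K) ^ (p - 1) * (ℓ * (2 * K)) := by
        gcongr
        exact (integral_abs_sub_le_mul_integral_abs_deriv hv hper hℓ.1).trans
          (mul_le_mul_of_nonneg_left (integral_abs_deriv_le_two_mul hv hper hK) hℓ.1)
    _ = (2 * K) ^ p * ℓ := by
        rw [mul_left_comm, ← Real.rpow_add_one' hK0 (by linarith), sub_add_cancel, mul_comm]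

lemma integral_abs_sub_rpow_le_of_le_one (hv : ContDiff ℝ 1 v) (hper : Periodic v 1)
    (hK : ∀ x, deriv v x ≤ K) (hK0 : 0 < K) (hℓ : ℓ ∈ Icc (0:ℝ) 1) (hp0 : 0 ≤ p)
    (hp1 : p ≤ 1) :
    ∫ x in (0:ℝ)..1, |v (x + ℓ) - v x| ^ p ≤ 2 * (2 * K) ^ p * ℓ ^ p := by
  rcases hp0.eq_or_lt with rfl | hp
  · norm_num
  rcases hℓ.1.eq_or_lt with rfl | hℓ0
  · simp [Real.zero_rpow hp.ne']
  rw [mul_assoc, ← Real.mul_rpow (by positivity) hℓ.1]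
  exact integral_rpow_le_two_mul_rpow
    ((hv.continuous.comp (continuous_add_const ℓ)).sub hv.continuous).abs
    (fun _ => abs_nonneg _) (by positivity)
    ((integral_abs_sub_le_mul_integral_abs_deriv hv hper hℓ.1).trans
      (by nlinarith [integral_abs_deriv_le_two_mul hv hper hK]))
    hp0 hp1

end StructureFunctionSlice

open intervalIntegral in
lemma inv_sub_mul_integral_le {g : ℝ → ℝ} {a b c : ℝ} (hab : a ≤ b)
    (hg : ∀ t ∈ Icc a b, 0 ≤ g t ∧ g t ≤ c) : (b - a)⁻¹ * ∫ t in a..b, g t ≤ c := by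
  rcases hab.eq_or_lt with rfl | hlt
  · simpa using (hg a ⟨le_rfl, le_rfl⟩).1.trans (hg a ⟨le_rfl, le_rfl⟩).2
  have hle : ∫ t in a..b, g t ≤ ∫ t in a..b, c := by
    rw [integral_of_le hab, integral_of_le hab]
    refine integral_mono_of_nonneg ?_ (integrableOn_const measure_Ioc_lt_top.ne) ?_
    all_goals
      filter_upwards [ae_restrict_mem measurableSet_Ioc] with t ht
    · exact (hg t (Ioc_subset_Icc_self ht)).1
    · exact (hg t (Ioc_subset_Icc_self ht)).2
  rw [intervalIntegral.integral_const, smul_eq_mul] at hle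
  rwa [inv_mul_le_iff₀ (sub_pos.2 hlt)]

/-- Improved upper bounds for structure functions:
`S_p(ℓ) ≤ C(p) ℓ^p` for `0 ≤ p ≤ 1` and `S_p(ℓ) ≤ C(p) ℓ` for `p ≥ 1`. -/
theorem stmt9 (f : ℝ → ℝ) (σ : ℝ)
    (hf : ContDiff ℝ (⊤ : ℕ∞) f) (hσ : 0 < σ)
    (hconv : ∀ x, σ ≤ iteratedDeriv 2 f x) (D Ct : ℝ) (hCt : 0 < Ct)
    (p : ℝ) (hp : 0 ≤ p) :
    ∃ C, 0 < C ∧ ∀ ν ∈ Ioc (0:ℝ) 1, ∀ u : ℝ → ℝ → ℝ,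
      BurgersSol f ν u → Dparam (u 0) = D →
      (∀ t, 0 ≤ t → (circH 1 (u t))^2 ≤ Ct * ν⁻¹) →
      ∀ ℓ ∈ Icc (0:ℝ) 1,
        (p ≤ 1 → Sfun σ D Ct u p ℓ ≤ C * ℓ ^ p) ∧
        (1 ≤ p → Sfun σ D Ct u p ℓ ≤ C * ℓ) := by
  rcases eq_or_ne D 0 with rfl | hD
  -- `D = 0` gives `T₁ = T₂ = 0` (as `0⁻¹ = 0`), so the time average vanishes
  · refine ⟨1, one_pos, fun ν _ u _ _ _ ℓ hℓ => ?_⟩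
    have hS : Sfun σ 0 Ct u p ℓ = 0 := by simp [Sfun, tavg, Tone, Ttwo]
    rw [hS]
    exact ⟨fun _ => by simpa using Real.rpow_nonneg hℓ.1 p, fun _ => by simpa using hℓ.1⟩
  set T₁ := Tone D Ct
  have hT₁ : 0 < T₁ := by
    have : 0 < D ^ 2 := by positivity
    simp only [T₁, Tone]
    positivity
  have hT : T₁ ≤ Ttwo σ D Ct := (by linarith : T₁ ≤ 3 / 2 * T₁).trans (le_max_left _ _)
  set K := (σ * T₁)⁻¹
  have hK : 0 < K := by positivity
  refine ⟨2 * (2 * K) ^ p, mul_pos two_pos (Real.rpow_pos_of_pos (by linarith) p),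
    fun ν hν u hu _ _ ℓ hℓ => ?_⟩
  have hslice : ∀ t, ContDiff ℝ 1 (u t) := fun t =>
    (hu.contDiff_uncurry.comp (contDiff_const.prodMk contDiff_id)).of_le
      (WithTop.coe_le_coe.2 le_top)
  have hslope : ∀ t ∈ Icc T₁ (Ttwo σ D Ct), ∀ x, deriv (u t) x ≤ K := fun t ht x =>
    (hu.deriv_le_inv (hf.of_le (WithTop.coe_le_coe.2 le_top)) hσ hconv hν.1.le
      (hT₁.trans_le ht.1) x).trans (inv_anti₀ (by positivity) (by gcongr; exact ht.1))
  have hnonneg : ∀ t, 0 ≤ ∫ x in (0:ℝ)..1, |u t (x + ℓ) - u t x| ^ p := fun t =>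
    intervalIntegral.integral_nonneg zero_le_one fun _ _ => by positivity
  refine ⟨fun hp1 => inv_sub_mul_integral_le hT fun t ht => ⟨hnonneg t, ?_⟩,
    fun hp1 => inv_sub_mul_integral_le hT fun t ht => ⟨hnonneg t, ?_⟩⟩
  · exact integral_abs_sub_rpow_le_of_le_one (hslice t) (hu.2.1 t) (hslope t ht) hK hℓ hp hp1
  · refine (integral_abs_sub_rpow_le_of_one_le (hslice t) (hu.2.1 t) (hslope t ht) hℓ hp1).trans ?_
    rw [mul_assoc]
    exact le_mul_of_one_le_left (mul_nonneg (Real.rpow_nonneg (by linarith) p) hℓ.1) one_le_two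
end
end

section
/- L¹ contraction for the forced generalised Burgers equation: let η : [0,∞) × S¹ → ℝ be a continuous function which is C^∞ in the space variable, and let u and ū be two C^∞ solutions on [0,∞) × S¹ of the equation v_t + f'(v)v_x = ν v_xx + η (with the same force η but possibly different initial conditions). Then for all t ≥ 0, ∫_{S¹} |u(t,x) − ū(t,x)| dx ≤ ∫_{S¹} |u(0,x) − ū(0,x)| dx. -/
open MeasureTheory Set
open scoped ENNReal

noncomputable section

/-!
The difference `w = u - ū` solves `w_t = ν w_xx - (f(u) - f(ū))_x`: the force cancels.
Regularise `|·|` by `φ_ε(y) = √(y² + ε²)`. Two periodic integrations by parts give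
`d/dt ∫ φ_ε(w) = -ν ∫ φ_ε''(w) w_x² + ∫ φ_ε''(w) w_x (f(u) - f(ū))`, and the first term is
`≤ 0`. As `|f(u) - f(ū)| ≤ L |w|` and `φ_ε''(y) |y| ≤ 1`, the last integrand is bounded
uniformly in `ε`; it tends to `0` pointwise, because `φ_ε''(y) → 0` for `y ≠ 0` and the flux
difference vanishes where `w = 0`. Dominated convergence and `|y| ≤ φ_ε(y) ≤ |y| + ε` then
let `ε → 0`.
-/

open Filter Topology intervalIntegral Function

namespace ViscousL1

def smoothAbs (ε y : ℝ) : ℝ := √(y ^ 2 + ε ^ 2)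

def smoothAbs' (ε y : ℝ) : ℝ := y / √(y ^ 2 + ε ^ 2)

def smoothAbs'' (ε y : ℝ) : ℝ := ε ^ 2 / √(y ^ 2 + ε ^ 2) ^ 3

variable {ε y : ℝ}

theorem abs_le_smoothAbs (ε y : ℝ) : |y| ≤ smoothAbs ε y := by
  rw [smoothAbs, ← Real.sqrt_sq_eq_abs]
  exact Real.sqrt_le_sqrt (by nlinarith [sq_nonneg ε])

theorem smoothAbs_le_abs_add (hε : 0 ≤ ε) (y : ℝ) : smoothAbs ε y ≤ |y| + ε := by
  rw [smoothAbs, Real.sqrt_le_left (by positivity)]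
  nlinarith [abs_nonneg y, sq_abs y]

theorem hasDerivAt_smoothAbs (hε : ε ≠ 0) (y : ℝ) :
    HasDerivAt (smoothAbs ε) (smoothAbs' ε y) y := by
  have hpos : 0 < y ^ 2 + ε ^ 2 := by positivity
  refine (((hasDerivAt_pow 2 y).add_const (ε ^ 2)).sqrt hpos.ne').congr_deriv ?_
  rw [smoothAbs']
  field_simp
  ring

theorem hasDerivAt_smoothAbs' (hε : ε ≠ 0) (y : ℝ) :
    HasDerivAt (smoothAbs' ε) (smoothAbs'' ε y) y := by
  have hpos : 0 < y ^ 2 + ε ^ 2 := by positivity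
  have hsq : √(y ^ 2 + ε ^ 2) ^ 2 = y ^ 2 + ε ^ 2 := Real.sq_sqrt hpos.le
  refine ((hasDerivAt_id' y).div (hasDerivAt_smoothAbs hε y)
    (Real.sqrt_pos.2 hpos).ne').congr_deriv ?_
  rw [smoothAbs', smoothAbs'', smoothAbs]
  field_simp
  rw [hsq]
  ring

theorem continuous_smoothAbs (ε : ℝ) : Continuous (smoothAbs ε) := by
  unfold smoothAbs; fun_prop

theorem continuous_smoothAbs' (hε : ε ≠ 0) : Continuous (smoothAbs' ε) :=
  continuous_iff_continuousAt.2 fun y => (hasDerivAt_smoothAbs' hε y).continuousAt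

theorem continuous_smoothAbs'' (hε : ε ≠ 0) : Continuous (smoothAbs'' ε) := by
  refine continuous_const.div (by fun_prop) fun y => ?_
  have : 0 < y ^ 2 + ε ^ 2 := by positivity
  positivity

theorem smoothAbs''_nonneg (ε y : ℝ) : 0 ≤ smoothAbs'' ε y := by
  unfold smoothAbs''; positivity

theorem smoothAbs''_mul_abs_le_one (ε y : ℝ) : smoothAbs'' ε y * |y| ≤ 1 := by
  rcases eq_or_ne ε 0 with rfl | hε
  · simp [smoothAbs'']
  have hpos : 0 < y ^ 2 + ε ^ 2 := by positivity
  have hsq : √(y ^ 2 + ε ^ 2) ^ 2 = y ^ 2 + ε ^ 2 := Real.sq_sqrt hpos.le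
  have hy : |y| ≤ √(y ^ 2 + ε ^ 2) := abs_le_smoothAbs ε y
  rw [smoothAbs'', div_mul_eq_mul_div, div_le_one (by positivity)]
  calc ε ^ 2 * |y| ≤ (y ^ 2 + ε ^ 2) * √(y ^ 2 + ε ^ 2) := by
        gcongr; nlinarith [sq_nonneg y]
    _ = √(y ^ 2 + ε ^ 2) ^ 2 * √(y ^ 2 + ε ^ 2) := by rw [hsq]
    _ = √(y ^ 2 + ε ^ 2) ^ 3 := by ring

theorem tendsto_smoothAbs''_zero (hy : y ≠ 0) :
    Tendsto (fun ε => smoothAbs'' ε y) (𝓝 0) (𝓝 0) := by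
  have hs : √(y ^ 2 + 0 ^ 2) ^ 3 ≠ 0 := by simp [Real.sqrt_sq_eq_abs, hy]
  have hc : ContinuousAt (fun ε => smoothAbs'' ε y) 0 :=
    (continuous_pow 2).continuousAt.div (by fun_prop) hs
  simpa [smoothAbs''] using hc.tendsto

theorem abs_smoothAbs''_mul_mul_le {c g L : ℝ} (hL : 0 ≤ L) (hg : |g| ≤ L * |y|) :
    |smoothAbs'' ε y * c * g| ≤ L * |c| :=
  calc |smoothAbs'' ε y * c * g| = smoothAbs'' ε y * |c| * |g| := by
        rw [abs_mul, abs_mul, abs_of_nonneg (smoothAbs''_nonneg ε y)]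
    _ ≤ smoothAbs'' ε y * |c| * (L * |y|) := by have := smoothAbs''_nonneg ε y; gcongr
    _ = L * |c| * (smoothAbs'' ε y * |y|) := by ring
    _ ≤ L * |c| := mul_le_of_le_one_right (by positivity) (smoothAbs''_mul_abs_le_one ε y)

theorem tendsto_smoothAbs''_mul_mul {c g L : ℝ} (hg : |g| ≤ L * |y|) :
    Tendsto (fun ε => smoothAbs'' ε y * c * g) (𝓝 0) (𝓝 0) := by
  rcases eq_or_ne y 0 with rfl | hy
  · have hg0 : g = 0 := abs_nonpos_iff.1 (by simpa using hg)
    simp [hg0]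
  · simpa using ((tendsto_smoothAbs''_zero hy).mul_const c).mul_const g

section Slices

variable {u : ℝ → ℝ → ℝ}

theorem contDiff_apply_of_uncurry {n : WithTop ℕ∞} (hu : ContDiff ℝ n (uncurry u)) (t : ℝ) :
    ContDiff ℝ n (u t) :=
  hu.comp (contDiff_const.prodMk contDiff_id)

theorem hasDerivAt_apply_fst (hu : Differentiable ℝ (uncurry u)) (t x : ℝ) :
    HasDerivAt (fun s => u s x) (fderiv ℝ (uncurry u) (t, x) (1, 0)) t :=
  (hu (t, x)).hasFDerivAt.comp_hasDerivAt (f := fun s => (s, x)) t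
    ((hasDerivAt_id' t).prodMk (hasDerivAt_const t x))

theorem hasDerivAt_apply_snd (hu : Differentiable ℝ (uncurry u)) (t x : ℝ) :
    HasDerivAt (u t) (fderiv ℝ (uncurry u) (t, x) (0, 1)) x :=
  (hu (t, x)).hasFDerivAt.comp_hasDerivAt (f := fun y => (t, y)) x
    ((hasDerivAt_const x t).prodMk (hasDerivAt_id' x))

theorem continuous_deriv_fst (hu : ContDiff ℝ 1 (uncurry u)) :
    Continuous (uncurry fun t x => deriv (fun s => u s x) t) := by
  have h : (uncurry fun t x => deriv (fun s => u s x) t) =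
      fun q => fderiv ℝ (uncurry u) q (1, 0) :=
    funext fun q => (hasDerivAt_apply_fst (hu.differentiable one_ne_zero) q.1 q.2).deriv
  rw [h]
  exact (hu.continuous_fderiv one_ne_zero).clm_apply continuous_const

theorem continuous_deriv_snd (hu : ContDiff ℝ 1 (uncurry u)) :
    Continuous (uncurry fun t x => deriv (u t) x) := by
  have h : (uncurry fun t x => deriv (u t) x) = fun q => fderiv ℝ (uncurry u) q (0, 1) :=
    funext fun q => (hasDerivAt_apply_snd (hu.differentiable one_ne_zero) q.1 q.2).deriv
  rw [h]
  exact (hu.continuous_fderiv one_ne_zero).clm_apply continuous_const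

end Slices

theorem hasDerivAt_intervalIntegral_of_continuous {F F' : ℝ → ℝ → ℝ}
    (hF : Continuous (uncurry F)) (hF' : Continuous (uncurry F'))
    (hderiv : ∀ t x, HasDerivAt (fun s => F s x) (F' t x) t) (a b t : ℝ) :
    HasDerivAt (fun t => ∫ x in a..b, F t x) (∫ x in a..b, F' t x) t := by
  obtain ⟨C, hC⟩ := (isCompact_Icc.prod isCompact_uIcc).exists_bound_of_continuousOn
    (s := Icc (t - 1) (t + 1) ×ˢ uIcc a b) hF'.continuousOn
  refine (hasDerivAt_integral_of_dominated_loc_of_deriv_le (bound := fun _ => C)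
    (Metric.ball_mem_nhds t one_pos) (.of_forall fun s => (hF.uncurry_left s).aestronglyMeasurable)
    ((hF.uncurry_left t).intervalIntegrable _ _) (hF'.uncurry_left t).aestronglyMeasurable
    (.of_forall fun x hx s hs => hC (s, x) ⟨?_, uIoc_subset_uIcc hx⟩) intervalIntegrable_const
    (.of_forall fun x _ s _ => hderiv s x)).2
  rw [Real.ball_eq_Ioo] at hs
  exact Ioo_subset_Icc_self hs

theorem integral_mul_deriv_eq_neg_of_periodic {a a' b b' : ℝ → ℝ} {p : ℝ}
    (ha : ∀ x, HasDerivAt a (a' x) x) (hb : ∀ x, HasDerivAt b (b' x) x)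
    (ha' : Continuous a') (hb' : Continuous b') (hpa : Periodic a p) (hpb : Periodic b p) :
    ∫ x in 0..p, a x * b' x = -∫ x in 0..p, a' x * b x := by
  rw [integral_mul_deriv_eq_deriv_mul (fun x _ => ha x) (fun x _ => hb x)
    (ha'.intervalIntegrable _ _) (hb'.intervalIntegrable _ _), hpa.eq, hpb.eq, sub_self, zero_sub]

theorem periodic_deriv {g : ℝ → ℝ} {p : ℝ} (h : Periodic g p) : Periodic (deriv g) p :=
  fun x => by rw [← deriv_comp_add_const, funext h]

theorem tendsto_integral_integral_of_abs_le {ι : Type*} {l : Filter ι} [l.IsCountablyGenerated]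
    {F : ι → ℝ → ℝ → ℝ} {a b c d C : ℝ}
    (hF : ∀ᶠ i in l, Continuous (uncurry (F i)))
    (hbound : ∀ᶠ i in l, ∀ t ∈ uIcc a b, ∀ x ∈ uIcc c d, |F i t x| ≤ C)
    (hlim : ∀ t ∈ uIcc a b, ∀ x ∈ uIcc c d, Tendsto (fun i => F i t x) l (𝓝 0)) :
    Tendsto (fun i => ∫ t in a..b, ∫ x in c..d, F i t x) l (𝓝 0) := by
  have hinner : ∀ t ∈ uIcc a b, Tendsto (fun i => ∫ x in c..d, F i t x) l (𝓝 0) :=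
    fun t ht => by
    simpa using tendsto_integral_filter_of_dominated_convergence (fun _ => C)
      (hF.mono fun i hi => (hi.uncurry_left t).aestronglyMeasurable)
      (hbound.mono fun i hi => .of_forall fun x hx => hi t ht x (uIoc_subset_uIcc hx))
      intervalIntegrable_const (.of_forall fun x hx => hlim t ht x (uIoc_subset_uIcc hx))
  simpa using tendsto_integral_filter_of_dominated_convergence (fun _ => C * |d - c|)
    (hF.mono fun i hi =>
      (continuous_parametric_intervalIntegral_of_continuous' hi c d).aestronglyMeasurable)
    (hbound.mono fun i hi => .of_forall fun t ht => norm_integral_le_of_norm_le_const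
      fun x hx => hi t (uIoc_subset_uIcc ht) x (uIoc_subset_uIcc hx))
    intervalIntegrable_const (.of_forall fun t ht => hinner t (uIoc_subset_uIcc ht))

theorem exists_abs_sub_le_mul_abs_sub {X : Type*} [TopologicalSpace X] {f : ℝ → ℝ}
    {u v : X → ℝ} {K : Set X} (hf : ContDiff ℝ 1 f) (hK : IsCompact K) (hu : ContinuousOn u K)
    (hv : ContinuousOn v K) :
    ∃ L, 0 ≤ L ∧ ∀ q ∈ K, |f (u q) - f (v q)| ≤ L * |u q - v q| := by
  obtain ⟨L, hL⟩ := hf.locallyLipschitz.locallyLipschitzOn.exists_lipschitzOnWith_of_compact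
    ((hK.image_of_continuousOn hu).union (hK.image_of_continuousOn hv))
  refine ⟨L, L.2, fun q hq => ?_⟩
  simpa [Real.dist_eq] using
    hL.dist_le_mul (u q) (Or.inl ⟨q, hq, rfl⟩) (v q) (Or.inr ⟨q, hq, rfl⟩)

theorem integral_smoothAbs'_mul_viscous_le {ν p : ℝ} {w g : ℝ → ℝ} (hε : ε ≠ 0)
    (hν : 0 ≤ ν) (hp : 0 ≤ p) (hw : ContDiff ℝ 2 w) (hg : ContDiff ℝ 1 g) (hwp : Periodic w p)
    (hgp : Periodic g p) :
    ∫ x in 0..p, smoothAbs' ε (w x) * (ν * iteratedDeriv 2 w x - deriv g x) ≤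
      ∫ x in 0..p, smoothAbs'' ε (w x) * deriv w x * g x := by
  have hw' : ContDiff ℝ 1 (deriv w) := (contDiff_succ_iff_deriv.1 hw).2.2
  have hA : ∀ x, HasDerivAt (fun x => smoothAbs' ε (w x)) (smoothAbs'' ε (w x) * deriv w x) x :=
    fun x => (hasDerivAt_smoothAbs' hε _).comp x (hw.differentiable two_ne_zero x).hasDerivAt
  have hAc : Continuous fun x => smoothAbs'' ε (w x) * deriv w x :=
    ((continuous_smoothAbs'' hε).comp hw.continuous).mul hw'.continuous
  have hw'' : ∀ x, HasDerivAt (deriv w) (iteratedDeriv 2 w x) x := fun x => by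
    rw [iteratedDeriv_succ, iteratedDeriv_one]
    exact (hw'.differentiable one_ne_zero x).hasDerivAt
  have hw''c : Continuous (iteratedDeriv 2 w) := hw.continuous_iteratedDeriv 2 le_rfl
  have hg'c : Continuous (deriv g) := hg.continuous_deriv le_rfl
  have hvisc : ∫ x in 0..p, smoothAbs' ε (w x) * iteratedDeriv 2 w x =
      -∫ x in 0..p, smoothAbs'' ε (w x) * deriv w x * deriv w x :=
    integral_mul_deriv_eq_neg_of_periodic hA hw'' hAc hw''c
      (hwp.comp (smoothAbs' ε)) (periodic_deriv hwp)
  have hflux : ∫ x in 0..p, smoothAbs' ε (w x) * deriv g x =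
      -∫ x in 0..p, smoothAbs'' ε (w x) * deriv w x * g x :=
    integral_mul_deriv_eq_neg_of_periodic hA (fun x => (hg.differentiable one_ne_zero x).hasDerivAt)
      hAc hg'c (hwp.comp (smoothAbs' ε)) hgp
  have hdiss : 0 ≤ ∫ x in 0..p, smoothAbs'' ε (w x) * deriv w x * deriv w x :=
    integral_nonneg hp fun x _ => by
      rw [mul_assoc]; exact mul_nonneg (smoothAbs''_nonneg _ _) (mul_self_nonneg _)
  have hφ'c : Continuous fun x => smoothAbs' ε (w x) :=
    (continuous_smoothAbs' hε).comp hw.continuous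
  calc ∫ x in 0..p, smoothAbs' ε (w x) * (ν * iteratedDeriv 2 w x - deriv g x)
      = ν * (∫ x in 0..p, smoothAbs' ε (w x) * iteratedDeriv 2 w x) -
          ∫ x in 0..p, smoothAbs' ε (w x) * deriv g x := by
        simp_rw [mul_sub, mul_left_comm _ ν]
        rw [intervalIntegral.integral_sub, intervalIntegral.integral_const_mul]
        · exact ((hφ'c.mul hw''c).const_mul ν).intervalIntegrable _ _
        · exact (hφ'c.mul hg'c).intervalIntegrable _ _
    _ = -(ν * ∫ x in 0..p, smoothAbs'' ε (w x) * deriv w x * deriv w x) +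
          ∫ x in 0..p, smoothAbs'' ε (w x) * deriv w x * g x := by
        rw [hvisc, hflux]; ring
    _ ≤ ∫ x in 0..p, smoothAbs'' ε (w x) * deriv w x * g x := by
        linarith [mul_nonneg hν hdiss]

def fluxDissipation (ε : ℝ) (w g : ℝ → ℝ → ℝ) (t : ℝ) : ℝ :=
  ∫ x in 0..1, smoothAbs'' ε (w t x) * deriv (w t) x * g t x

theorem continuous_fluxDissipation {w g : ℝ → ℝ → ℝ} (hε : ε ≠ 0)
    (hw : ContDiff ℝ 1 (uncurry w)) (hg : Continuous (uncurry g)) :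
    Continuous (fluxDissipation ε w g) :=
  continuous_parametric_intervalIntegral_of_continuous'
    ((((continuous_smoothAbs'' hε).comp hw.continuous).mul (continuous_deriv_snd hw)).mul hg) 0 1

theorem integral_abs_le_add_integral_fluxDissipation {ν T : ℝ} {w g : ℝ → ℝ → ℝ}
    (hε : 0 < ε) (hν : 0 ≤ ν) (hT : 0 ≤ T)
    (hw : ContDiff ℝ 2 (uncurry w)) (hg : ContDiff ℝ 1 (uncurry g))
    (hwp : ∀ t, Periodic (w t) 1) (hgp : ∀ t, Periodic (g t) 1)
    (heq : ∀ t, 0 ≤ t → ∀ x,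
      deriv (fun s => w s x) t = ν * iteratedDeriv 2 (w t) x - deriv (g t) x) :
    ∫ x in 0..1, |w T x| ≤
      (∫ x in 0..1, |w 0 x|) + ε + ∫ t in 0..T, fluxDissipation ε w g t := by
  have hw1 : ContDiff ℝ 1 (uncurry w) := hw.of_le (by norm_num)
  have hwc : Continuous (uncurry w) := hw.continuous
  set Φ := fun t => ∫ x in 0..1, smoothAbs ε (w t x)
  set Φ' := fun t => ∫ x in 0..1, smoothAbs' ε (w t x) * deriv (fun s => w s x) t
  have hΦ_cont : Continuous (uncurry fun t x => smoothAbs ε (w t x)) :=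
    (continuous_smoothAbs ε).comp hwc
  have hΦc : ∀ t, Continuous fun x => smoothAbs ε (w t x) := fun t => hΦ_cont.uncurry_left t
  have hΦ'_cont :
      Continuous (uncurry fun t x => smoothAbs' ε (w t x) * deriv (fun s => w s x) t) :=
    ((continuous_smoothAbs' hε.ne').comp hwc).mul (continuous_deriv_fst hw1)
  have hΦ' : ∀ t, HasDerivAt Φ (Φ' t) t :=
    hasDerivAt_intervalIntegral_of_continuous hΦ_cont hΦ'_cont
      (fun t x => (hasDerivAt_smoothAbs hε.ne' _).comp t
        (hasDerivAt_apply_fst (hw1.differentiable one_ne_zero) t x).differentiableAt.hasDerivAt)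
      0 1
  have hΦ'_le : ∀ t ∈ Icc 0 T, Φ' t ≤ fluxDissipation ε w g t := fun t ht => by
    simp only [Φ', heq t ht.1]
    exact integral_smoothAbs'_mul_viscous_le hε.ne' hν zero_le_one
      (contDiff_apply_of_uncurry hw t) (contDiff_apply_of_uncurry hg t) (hwp t) (hgp t)
  have hΦ0 : Φ 0 ≤ (∫ x in 0..1, |w 0 x|) + ε := by
    have hwc0 : Continuous fun x => |w 0 x| := (hwc.uncurry_left 0).abs
    calc Φ 0 ≤ ∫ x in 0..1, (|w 0 x| + ε) :=
          integral_mono_on zero_le_one ((hΦc 0).intervalIntegrable _ _)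
            ((hwc0.add continuous_const).intervalIntegrable _ _)
            fun x _ => smoothAbs_le_abs_add hε.le _
      _ = (∫ x in 0..1, |w 0 x|) + ε := by
          rw [intervalIntegral.integral_add (hwc0.intervalIntegrable _ _) intervalIntegrable_const]
          simp
  calc ∫ x in 0..1, |w T x| ≤ Φ T :=
        integral_mono_on zero_le_one ((hwc.uncurry_left T).abs.intervalIntegrable _ _)
          ((hΦc T).intervalIntegrable _ _) fun x _ => abs_le_smoothAbs ε _
    _ = Φ 0 + ∫ t in 0..T, Φ' t := by
        rw [integral_eq_sub_of_hasDerivAt (fun t _ => hΦ' t)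
          ((continuous_parametric_intervalIntegral_of_continuous' hΦ'_cont 0 1).intervalIntegrable
            _ _)]
        ring
    _ ≤ (∫ x in 0..1, |w 0 x|) + ε + ∫ t in 0..T, fluxDissipation ε w g t :=
        add_le_add hΦ0 (integral_mono_on hT
          ((continuous_parametric_intervalIntegral_of_continuous' hΦ'_cont 0 1).intervalIntegrable
            _ _)
          ((continuous_fluxDissipation hε.ne' hw1 hg.continuous).intervalIntegrable _ _) hΦ'_le)

theorem tendsto_integral_fluxDissipation {w g : ℝ → ℝ → ℝ} {T L : ℝ}
    (hw : ContDiff ℝ 1 (uncurry w)) (hg : Continuous (uncurry g)) (hL : 0 ≤ L)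
    (hgw : ∀ t ∈ uIcc 0 T, ∀ x ∈ uIcc 0 1, |g t x| ≤ L * |w t x|) :
    Tendsto (fun ε => ∫ t in 0..T, fluxDissipation ε w g t) (𝓝[>] 0) (𝓝 0) := by
  obtain ⟨C, hC⟩ := (isCompact_uIcc.prod isCompact_uIcc).exists_bound_of_continuousOn
    (s := uIcc 0 T ×ˢ uIcc 0 1) (continuous_deriv_snd hw).continuousOn
  refine tendsto_integral_integral_of_abs_le (C := L * C) ?_ ?_ fun t ht x hx =>
    (tendsto_smoothAbs''_mul_mul (hgw t ht x hx)).mono_left nhdsWithin_le_nhds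
  · filter_upwards [self_mem_nhdsWithin] with ε hε
    exact (((continuous_smoothAbs'' (ne_of_gt hε)).comp hw.continuous).mul
      (continuous_deriv_snd hw)).mul hg
  · refine .of_forall fun ε t ht x hx => (abs_smoothAbs''_mul_mul_le hL (hgw t ht x hx)).trans ?_
    exact mul_le_mul_of_nonneg_left (hC (t, x) ⟨ht, hx⟩) hL

theorem deriv_sub_eq_viscous_of_burgers {f : ℝ → ℝ} {u v : ℝ → ℝ → ℝ} {ν e t x : ℝ}
    (hf : ContDiff ℝ 1 f) (hu : ContDiff ℝ 2 (uncurry u)) (hv : ContDiff ℝ 2 (uncurry v))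
    (hueq : deriv (fun s => u s x) t + deriv f (u t x) * deriv (u t) x =
      ν * iteratedDeriv 2 (u t) x + e)
    (hveq : deriv (fun s => v s x) t + deriv f (v t x) * deriv (v t) x =
      ν * iteratedDeriv 2 (v t) x + e) :
    deriv (fun s => u s x - v s x) t =
      ν * iteratedDeriv 2 (fun y => u t y - v t y) x -
        deriv (fun y => f (u t y) - f (v t y)) x := by
  have hut := (hasDerivAt_apply_fst (hu.differentiable two_ne_zero) t x).differentiableAt
  have hvt := (hasDerivAt_apply_fst (hv.differentiable two_ne_zero) t x).differentiableAt
  have hux := contDiff_apply_of_uncurry hu t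
  have hvx := contDiff_apply_of_uncurry hv t
  have hfd : ∀ y, HasDerivAt f (deriv f y) y :=
    fun y => (hf.differentiable one_ne_zero y).hasDerivAt
  have hflux : deriv (fun y => f (u t y) - f (v t y)) x =
      deriv f (u t x) * deriv (u t) x - deriv f (v t x) * deriv (v t) x :=
    (((hfd _).comp x (hux.differentiable two_ne_zero x).hasDerivAt).sub
      ((hfd _).comp x (hvx.differentiable two_ne_zero x).hasDerivAt)).deriv
  rw [deriv_fun_sub hut hvt, hflux,
    show (fun y => u t y - v t y) = u t - v t from rfl,
    iteratedDeriv_sub hux.contDiffAt hvx.contDiffAt]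
  linarith

end ViscousL1

open ViscousL1

theorem stmt19_general (f : ℝ → ℝ) (ν : ℝ)
    (hf : ContDiff ℝ (⊤ : ℕ∞) f) (hν : 0 < ν)
    (η u v : ℝ → ℝ → ℝ)
    (hu : ContDiff ℝ (⊤ : ℕ∞) (fun q : ℝ × ℝ => u q.1 q.2))
    (hv : ContDiff ℝ (⊤ : ℕ∞) (fun q : ℝ × ℝ => v q.1 q.2))
    (huper : ∀ t, Function.Periodic (u t) 1)
    (hvper : ∀ t, Function.Periodic (v t) 1)
    (hueq : ∀ t, 0 ≤ t → ∀ x,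
      deriv (fun s => u s x) t + deriv f (u t x) * deriv (u t) x
        = ν * iteratedDeriv 2 (u t) x + η t x)
    (hveq : ∀ t, 0 ≤ t → ∀ x,
      deriv (fun s => v s x) t + deriv f (v t x) * deriv (v t) x
        = ν * iteratedDeriv 2 (v t) x + η t x) :
    ∀ t, 0 ≤ t →
      (∫ x in (0:ℝ)..1, |u t x - v t x|) ≤ ∫ x in (0:ℝ)..1, |u 0 x - v 0 x| := by
  intro T hT
  set w := fun t x => u t x - v t x
  set g := fun t x => f (u t x) - f (v t x)
  have hu2 : ContDiff ℝ 2 (uncurry u) := hu.of_le (by norm_cast)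
  have hv2 : ContDiff ℝ 2 (uncurry v) := hv.of_le (by norm_cast)
  have hf1 : ContDiff ℝ 1 f := hf.of_le (by norm_cast)
  have hw : ContDiff ℝ 2 (uncurry w) := hu2.sub hv2
  have hg : ContDiff ℝ 1 (uncurry g) := (hf1.comp (hu2.of_le one_le_two)).sub
    (hf1.comp (hv2.of_le one_le_two))
  obtain ⟨L, hL, hLip⟩ := exists_abs_sub_le_mul_abs_sub hf1
    (isCompact_uIcc.prod isCompact_uIcc) (K := uIcc 0 T ×ˢ uIcc 0 1)
    hu.continuous.continuousOn hv.continuous.continuousOn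
  have hestimate : ∀ ε > 0, (∫ x in (0:ℝ)..1, |w T x|) ≤
      (∫ x in (0:ℝ)..1, |w 0 x|) + ε + ∫ t in 0..T, fluxDissipation ε w g t := fun ε hε =>
    integral_abs_le_add_integral_fluxDissipation hε hν.le hT hw hg
      (fun t => (huper t).sub (hvper t)) (fun t => ((huper t).comp f).sub ((hvper t).comp f))
      fun t ht x => deriv_sub_eq_viscous_of_burgers hf1 hu2 hv2 (hueq t ht x) (hveq t ht x)
  have hlim : Tendsto
      (fun ε => (∫ x in (0:ℝ)..1, |w 0 x|) + ε + ∫ t in 0..T, fluxDissipation ε w g t)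
      (𝓝[>] 0) (𝓝 (∫ x in (0:ℝ)..1, |w 0 x|)) := by
    simpa using (tendsto_const_nhds.add (tendsto_id.mono_left nhdsWithin_le_nhds)).add
      (tendsto_integral_fluxDissipation (hw.of_le one_le_two) hg.continuous hL
        fun t ht x hx => hLip (t, x) ⟨ht, hx⟩)
  exact ge_of_tendsto hlim (eventually_nhdsWithin_of_forall hestimate)

/-- L¹ contraction for the forced generalised Burgers equation: two smooth
space-periodic solutions with the same force satisfy
`|u(t) - ū(t)|_{L¹} ≤ |u(0) - ū(0)|_{L¹}` for all `t ≥ 0`. -/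
theorem stmt19 (f : ℝ → ℝ) (σ ν : ℝ)
    (hf : ContDiff ℝ (⊤ : ℕ∞) f) (hσ : 0 < σ)
    (hconv : ∀ x, σ ≤ iteratedDeriv 2 f x) (hν : 0 < ν)
    (η u v : ℝ → ℝ → ℝ)
    (hη : Continuous (fun q : ℝ × ℝ => η q.1 q.2))
    (hηx : ∀ t, ContDiff ℝ (⊤ : ℕ∞) (η t))
    (hηper : ∀ t, Function.Periodic (η t) 1)
    (hu : ContDiff ℝ (⊤ : ℕ∞) (fun q : ℝ × ℝ => u q.1 q.2))
    (hv : ContDiff ℝ (⊤ : ℕ∞) (fun q : ℝ × ℝ => v q.1 q.2))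
    (huper : ∀ t, Function.Periodic (u t) 1)
    (hvper : ∀ t, Function.Periodic (v t) 1)
    (hueq : ∀ t, 0 ≤ t → ∀ x,
      deriv (fun s => u s x) t + deriv f (u t x) * deriv (u t) x
        = ν * iteratedDeriv 2 (u t) x + η t x)
    (hveq : ∀ t, 0 ≤ t → ∀ x,
      deriv (fun s => v s x) t + deriv f (v t x) * deriv (v t) x
        = ν * iteratedDeriv 2 (v t) x + η t x) :
    ∀ t, 0 ≤ t →
      (∫ x in (0:ℝ)..1, |u t x - v t x|) ≤ ∫ x in (0:ℝ)..1, |u 0 x - v 0 x| :=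
  stmt19_general f ν hf hν η u v hu hv huper hvper hueq hveq
end
end
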